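/- Let t : M → H* be a smooth map from a manifold M to the dual of a vector space H of 'affine functions', satisfying ⟨t(z), 1⟩ = 1 for all z (where 1 ∈ H is the constant function). Let κ̃_a : V → H be smooth maps (a ∈ A) and R : M → V a smooth map with components R^a, such that ⟨κ̃_a(R(z)), t(z)⟩ = 0 for all z ∈ M and a ∈ A, and such that there exist 1-forms β_a and functions γ_{ab} on V with dκ̃_a = β_a κ̃_a + Σ_b γ_{ab} κ̃_b dr_b modulo dr_a. Writing θ_a = ⟨κ_a(R), dt⟩ where κ_a is the t-linear part of κ̃_a, one has R*θ_a ∧ dR^a = 0 for each a ∈ A. -/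

import Mathlib

open scoped BigOperators

/-- Partial derivative `∂/∂r_b` of a function on `ℝ^N`. -/
noncomputable def pd {N : ℕ} {F : Type*} [NormedAddCommGroup F] [NormedSpace ℝ F]
    (b : Fin N) (f : (Fin N → ℝ) → F) (x : Fin N → ℝ) : F :=
  fderiv ℝ f x (Pi.single b 1)

/-- Tsarev's generalized hodograph method: if `⟨κ̃_a(R z), t z⟩ = 0` on `M` for a family
`κ̃_a` solving the linear compatibility system `∂_b κ̃_a = β_{ab} κ̃_a + γ_{ab} κ̃_b`
(`b ≠ a`), then `R` solves the hydrodynamic system: `R*θ_a ∧ dR^a = 0`, where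
`θ_a = ⟨κ̃_a(R), dt⟩`.  Here `H ≅ ℝ^q` is the space of affine functions, `t : M → H*`
is expressed in coordinates, with `⟨t z, 1⟩ = 1` for the constant function `one ∈ H`. -/
theorem generalized_hodograph {p q N : ℕ}
    (M : Set (Fin p → ℝ)) (hM : IsOpen M)
    (V : Set (Fin N → ℝ)) (hV : IsOpen V)
    (t : (Fin p → ℝ) → (Fin q → ℝ)) (one : Fin q → ℝ)
    (κ : Fin N → (Fin N → ℝ) → (Fin q → ℝ))
    (β γ : Fin N → Fin N → (Fin N → ℝ) → ℝ)
    (R : (Fin p → ℝ) → (Fin N → ℝ))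
    (ht : ContDiff ℝ (⊤ : ℕ∞) t) (hκ : ∀ a, ContDiff ℝ (⊤ : ℕ∞) (κ a)) (hR : ContDiff ℝ (⊤ : ℕ∞) R)
    (hone : ∀ z ∈ M, ∑ i, one i * t z i = 1)
    (hRV : ∀ z ∈ M, R z ∈ V)
    (himplicit : ∀ z ∈ M, ∀ a, ∑ i, κ a (R z) i * t z i = 0)
    (hcompat : ∀ a b, b ≠ a → ∀ r ∈ V,
      pd b (κ a) r = β a b r • κ a r + γ a b r • κ b r) :
    ∀ z ∈ M, ∀ a, ∀ v w : Fin p → ℝ,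
      (∑ i, κ a (R z) i * fderiv ℝ t z v i) * fderiv ℝ (fun s => R s a) z w
        - (∑ i, κ a (R z) i * fderiv ℝ t z w i) * fderiv ℝ (fun s => R s a) z v = 0 := by

  intro z hz a v w
  have hxV : R z ∈ V := hRV z hz
  have hRd : HasFDerivAt R (fderiv ℝ R z) z := (hR.differentiable (by simp) z).hasFDerivAt
  have hκd : HasFDerivAt (κ a) (fderiv ℝ (κ a) (R z)) (R z) :=
    ((hκ a).differentiable (by simp) (R z)).hasFDerivAt
  have htd : HasFDerivAt t (fderiv ℝ t z) z := (ht.differentiable (by simp) z).hasFDerivAt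
  set A' : (Fin p → ℝ) →L[ℝ] (Fin q → ℝ) := (fderiv ℝ (κ a) (R z)).comp (fderiv ℝ R z) with hA'
  have hcomp : HasFDerivAt (fun s => κ a (R s)) A' z := hκd.comp z hRd
  have hf : HasFDerivAt (fun s => ∑ i, κ a (R s) i * t s i)
      (∑ i : Fin q, (κ a (R z) i • ((ContinuousLinearMap.proj i).comp (fderiv ℝ t z))
        + t z i • ((ContinuousLinearMap.proj i).comp A'))) z := by
    apply HasFDerivAt.fun_sum
    intro i _
    exact ((ContinuousLinearMap.proj i).hasFDerivAt.comp z hcomp).mul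
      ((ContinuousLinearMap.proj (R := ℝ) (φ := fun _ : Fin q => ℝ) i).hasFDerivAt.comp z htd)
  have hzero : fderiv ℝ (fun s => ∑ i, κ a (R s) i * t s i) z = 0 := by
    have heq : (fun s => ∑ i, κ a (R s) i * t s i) =ᶠ[nhds z] fun _ => (0:ℝ) := by
      filter_upwards [hM.mem_nhds hz] with s hs using himplicit s hs a
    rw [heq.fderiv_eq]
    exact fderiv_const_apply 0
  have hD : (∑ i : Fin q, (κ a (R z) i • ((ContinuousLinearMap.proj i).comp (fderiv ℝ t z))
        + t z i • ((ContinuousLinearMap.proj i).comp A'))) = 0 := by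
    rw [← hf.fderiv, hzero]
  -- expand derivative of κ a in basis directions
  have hexp : ∀ u' : Fin N → ℝ, fderiv ℝ (κ a) (R z) u' = ∑ b, u' b • pd b (κ a) (R z) := by
    intro u'
    have hu : u' = ∑ b, u' b • (Pi.single b 1 : Fin N → ℝ) := by
      ext j
      simp [Pi.single_apply]
    calc fderiv ℝ (κ a) (R z) u'
        = fderiv ℝ (κ a) (R z) (∑ b, u' b • (Pi.single b 1 : Fin N → ℝ)) := by rw [← hu]
      _ = ∑ b, u' b • fderiv ℝ (κ a) (R z) (Pi.single b 1) := by
          rw [map_sum]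
          exact Finset.sum_congr rfl fun b _ => by rw [map_smul]
      _ = ∑ b, u' b • pd b (κ a) (R z) := rfl
  have hvanish : ∀ b, b ≠ a → (∑ i, t z i * pd b (κ a) (R z) i) = 0 := by
    intro b hb
    rw [hcompat a b hb (R z) hxV]
    have : ∀ i, t z i * (β a b (R z) • κ a (R z) + γ a b (R z) • κ b (R z)) i
        = β a b (R z) * (κ a (R z) i * t z i) + γ a b (R z) * (κ b (R z) i * t z i) := by
      intro i
      simp [Pi.add_apply, Pi.smul_apply, smul_eq_mul]
      ring
    rw [Finset.sum_congr rfl fun i _ => this i, Finset.sum_add_distrib,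
      ← Finset.mul_sum, ← Finset.mul_sum, himplicit z hz a, himplicit z hz b]
    ring
  have key : ∀ u : Fin p → ℝ, (∑ i, κ a (R z) i * fderiv ℝ t z u i)
      = - (fderiv ℝ R z u a * ∑ i, t z i * pd a (κ a) (R z) i) := by
    intro u
    have h0 : (∑ i : Fin q, (κ a (R z) i • ((ContinuousLinearMap.proj i).comp (fderiv ℝ t z))
        + t z i • ((ContinuousLinearMap.proj i).comp A'))) u = 0 := by rw [hD]; rfl
    rw [ContinuousLinearMap.sum_apply] at h0
    simp only [ContinuousLinearMap.add_apply, ContinuousLinearMap.smul_apply,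
      ContinuousLinearMap.comp_apply, ContinuousLinearMap.proj_apply, smul_eq_mul] at h0
    have hAu : ∀ i, (A' u) i = ∑ b, fderiv ℝ R z u b * pd b (κ a) (R z) i := by
      intro i
      rw [hA']
      show (fderiv ℝ (κ a) (R z)) (fderiv ℝ R z u) i = _
      rw [hexp (fderiv ℝ R z u)]
      simp [Finset.sum_apply, smul_eq_mul]
    have h1 : (∑ i, κ a (R z) i * fderiv ℝ t z u i)
        + ∑ b, fderiv ℝ R z u b * (∑ i, t z i * pd b (κ a) (R z) i) = 0 := by
      rw [← h0, Finset.sum_add_distrib]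
      congr 1
      calc ∑ b, fderiv ℝ R z u b * (∑ i, t z i * pd b (κ a) (R z) i)
          = ∑ b, ∑ i, fderiv ℝ R z u b * (t z i * pd b (κ a) (R z) i) := by
            exact Finset.sum_congr rfl fun b _ => Finset.mul_sum _ _ _
        _ = ∑ i, ∑ b, fderiv ℝ R z u b * (t z i * pd b (κ a) (R z) i) := Finset.sum_comm
        _ = ∑ i, t z i * A' u i := by
            refine Finset.sum_congr rfl fun i _ => ?_
            rw [hAu i, Finset.mul_sum]
            exact Finset.sum_congr rfl fun b _ => by ring
    have h2 : (∑ b, fderiv ℝ R z u b * (∑ i, t z i * pd b (κ a) (R z) i))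
        = fderiv ℝ R z u a * ∑ i, t z i * pd a (κ a) (R z) i := by
      rw [Finset.sum_eq_single a]
      · intro b _ hb
        rw [hvanish b hb, mul_zero]
      · intro h; exact absurd (Finset.mem_univ a) h
    linarith [h1, h2.symm ▸ h1]
  have hproj : ∀ u, fderiv ℝ (fun s => R s a) z u = fderiv ℝ R z u a := by
    intro u
    have h : HasFDerivAt (fun s => R s a)
        ((ContinuousLinearMap.proj a).comp (fderiv ℝ R z)) z :=
      ((ContinuousLinearMap.proj a : (Fin N → ℝ) →L[ℝ] ℝ).hasFDerivAt).comp z hRd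
    rw [h.fderiv]; rfl
  rw [key v, key w, hproj v, hproj w]
  ring
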